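/- Fix channel gains h₁ ≥ h₂ > 0 and rates r₁, r₂ ≥ 0. The set of total powers { P₁ + P₂ : P₁, P₂ ≥ 0 and (r₁, r₂) is decodable in the broadcast channel with powers (P₁, P₂) } has a minimum, and this minimum equals (2^{r₂} − 1)/h₂^2 + (2^{r₁} − 1)·2^{r₂}/h₁^2; it is attained at P₁ = (2^{r₁} − 1)/h₁^2 and P₂ = (2^{r₂} − 1)·(1 + h₂^2·P₁)/h₂^2. -/

import Mathlib

open Real

/-- Rate pair `(r₁, r₂)` is decodable in the two-user Gaussian broadcast channel with
gains `h₁ ≥ h₂`, codeword powers `P₁, P₂` and unit-variance noise at both receivers. -/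
def bcDec (h₁ h₂ P₁ P₂ r₁ r₂ : ℝ) : Prop :=
  Real.logb 2 (1 + h₂ ^ 2 * P₂ / (1 + h₂ ^ 2 * P₁)) ≥ r₂ ∧
    Real.logb 2 (1 + h₁ ^ 2 * P₁) ≥ r₁

theorem bc_min_total_power
    (h₁ h₂ r₁ r₂ : ℝ) (hh₂ : 0 < h₂) (hh : h₂ ≤ h₁) (hr₁ : 0 ≤ r₁) (hr₂ : 0 ≤ r₂) :
    IsLeast {p : ℝ | ∃ P₁ P₂ : ℝ, 0 ≤ P₁ ∧ 0 ≤ P₂ ∧ bcDec h₁ h₂ P₁ P₂ r₁ r₂ ∧ p = P₁ + P₂}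
      (((2 : ℝ) ^ r₂ - 1) / h₂ ^ 2 + ((2 : ℝ) ^ r₁ - 1) * (2 : ℝ) ^ r₂ / h₁ ^ 2) ∧
    (bcDec h₁ h₂ (((2 : ℝ) ^ r₁ - 1) / h₁ ^ 2)
        (((2 : ℝ) ^ r₂ - 1) * (1 + h₂ ^ 2 * (((2 : ℝ) ^ r₁ - 1) / h₁ ^ 2)) / h₂ ^ 2) r₁ r₂ ∧
      ((2 : ℝ) ^ r₁ - 1) / h₁ ^ 2 +
          ((2 : ℝ) ^ r₂ - 1) * (1 + h₂ ^ 2 * (((2 : ℝ) ^ r₁ - 1) / h₁ ^ 2)) / h₂ ^ 2 =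
        ((2 : ℝ) ^ r₂ - 1) / h₂ ^ 2 + ((2 : ℝ) ^ r₁ - 1) * (2 : ℝ) ^ r₂ / h₁ ^ 2) := by
  have hh₁ : 0 < h₁ := lt_of_lt_of_le hh₂ hh
  have h1sq : (0:ℝ) < h₁ ^ 2 := by positivity
  have h2sq : (0:ℝ) < h₂ ^ 2 := by positivity
  have ha : (1:ℝ) ≤ (2:ℝ) ^ r₁ := by
    have := Real.rpow_le_rpow_of_exponent_le (one_le_two) hr₁ (x := 2) (y := 0) (z := r₁)
    simpa [Real.rpow_zero] using this
  have hb : (1:ℝ) ≤ (2:ℝ) ^ r₂ := by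
    have := Real.rpow_le_rpow_of_exponent_le (one_le_two) hr₂ (x := 2) (y := 0) (z := r₂)
    simpa [Real.rpow_zero] using this
  set a := (2:ℝ) ^ r₁ with ha_def
  set b := (2:ℝ) ^ r₂ with hb_def
  have hP1n : (0:ℝ) ≤ (a - 1) / h₁ ^ 2 := div_nonneg (by linarith) (le_of_lt h1sq)
  have hpos : (0:ℝ) < 1 + h₂ ^ 2 * ((a - 1) / h₁ ^ 2) := by nlinarith
  have key1 : 1 + h₁ ^ 2 * ((a - 1) / h₁ ^ 2) = a := by field_simp; ring
  have key2 : 1 + h₂ ^ 2 * ((b - 1) * (1 + h₂ ^ 2 * ((a - 1) / h₁ ^ 2)) / h₂ ^ 2) /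
      (1 + h₂ ^ 2 * ((a - 1) / h₁ ^ 2)) = b := by
    have hD : (1 + h₂ ^ 2 * ((a - 1) / h₁ ^ 2)) ≠ 0 := ne_of_gt hpos
    rw [show h₂ ^ 2 * ((b - 1) * (1 + h₂ ^ 2 * ((a - 1) / h₁ ^ 2)) / h₂ ^ 2)
        = (b - 1) * (1 + h₂ ^ 2 * ((a - 1) / h₁ ^ 2)) from by field_simp,
      mul_div_assoc, div_self hD, mul_one]
    ring
  have hlog : ∀ r : ℝ, Real.logb 2 ((2:ℝ) ^ r) = r := fun r =>
    Real.logb_rpow (by norm_num) (by norm_num)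
  have hdec : bcDec h₁ h₂ ((a - 1) / h₁ ^ 2)
      ((b - 1) * (1 + h₂ ^ 2 * ((a - 1) / h₁ ^ 2)) / h₂ ^ 2) r₁ r₂ := by
    constructor
    · rw [key2, hb_def, hlog]
    · rw [key1, ha_def, hlog]
  have heq : (a - 1) / h₁ ^ 2 + (b - 1) * (1 + h₂ ^ 2 * ((a - 1) / h₁ ^ 2)) / h₂ ^ 2 =
      (b - 1) / h₂ ^ 2 + (a - 1) * b / h₁ ^ 2 := by
    field_simp
    ring
  refine ⟨⟨⟨(a - 1) / h₁ ^ 2, (b - 1) * (1 + h₂ ^ 2 * ((a - 1) / h₁ ^ 2)) / h₂ ^ 2,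
      hP1n, ?_, hdec, heq.symm⟩, ?_⟩, hdec, heq⟩
  · exact div_nonneg (mul_nonneg (by linarith) (le_of_lt hpos)) (le_of_lt h2sq)
  · rintro p ⟨P₁, P₂, hP₁, hP₂, ⟨hd2, hd1⟩, rfl⟩
    have hpos1 : (0:ℝ) < 1 + h₁ ^ 2 * P₁ := by nlinarith
    have hposd : (0:ℝ) < 1 + h₂ ^ 2 * P₁ := by nlinarith
    have hA : a ≤ 1 + h₁ ^ 2 * P₁ :=
      (Real.le_logb_iff_rpow_le (by norm_num) hpos1).mp hd1
    have hB : b ≤ 1 + h₂ ^ 2 * P₂ / (1 + h₂ ^ 2 * P₁) := by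
      have hpos2 : (0:ℝ) < 1 + h₂ ^ 2 * P₂ / (1 + h₂ ^ 2 * P₁) := by positivity
      exact (Real.le_logb_iff_rpow_le (by norm_num) hpos2).mp hd2
    have hB' : (b - 1) * (1 + h₂ ^ 2 * P₁) ≤ h₂ ^ 2 * P₂ := by
      have h1 : b - 1 ≤ h₂ ^ 2 * P₂ / (1 + h₂ ^ 2 * P₁) := by linarith
      calc (b - 1) * (1 + h₂ ^ 2 * P₁)
          ≤ h₂ ^ 2 * P₂ / (1 + h₂ ^ 2 * P₁) * (1 + h₂ ^ 2 * P₁) :=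
            mul_le_mul_of_nonneg_right h1 (le_of_lt hposd)
        _ = h₂ ^ 2 * P₂ := div_mul_cancel₀ _ (ne_of_gt hposd)
    rw [div_add_div _ _ (ne_of_gt h2sq) (ne_of_gt h1sq), div_le_iff₀ (by positivity)]
    nlinarith [mul_le_mul_of_nonneg_left hA (by linarith : (0:ℝ) ≤ b - 1),
      mul_pos h1sq h2sq, mul_nonneg hP₁ hP₂, mul_nonneg (le_of_lt h2sq) hP₁,
      mul_le_mul_of_nonneg_left hB' (le_of_lt h1sq)]
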